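/- Fix m > 0 and l ∈ ℝ. On the slit plane ℂ ∖ (−∞, 0], with r = |z| and φ = Arg z ∈ (−π, π), define w_l(z) = (e^{i(l−1/2)φ} I_{l−1/2}(mr), e^{i(l+1/2)φ} I_{l+1/2}(mr)) and w*_l(z) = (e^{−i(l+1/2)φ} I_{l+1/2}(mr), e^{−i(l−1/2)φ} I_{l−1/2}(mr)). Then w_l and w*_l are real-differentiable on the slit plane and satisfy ∂_z w_l = (m/2) w_{l−1}, ∂_z̄ w_l = (m/2) w_{l+1}, ∂_z w*_l = (m/2) w*_{l+1}, and ∂_z̄ w*_l = (m/2) w*_{l−1} componentwise; in particular each w_l and each w*_l solves the Dirac equation ∂_z ψ₂ = (m/2)ψ₁, ∂_z̄ ψ₁ = (m/2)ψ₂. -/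

import Mathlib

open Complex

/-- Modified Bessel function of the first kind,
`I_ν(x) = ∑_{k=0}^∞ (x/2)^{2k+ν}/(k! Γ(k+ν+1))`; terms where `1/Γ` is evaluated at a pole of
`Γ` vanish (Mathlib's `Real.Gamma` is `0` at the poles, so the division yields `0`). -/
noncomputable def besselI (ν : ℝ) (x : ℝ) : ℝ :=
  ∑' k : ℕ, (x / 2) ^ (2 * (k : ℝ) + ν) / ((k.factorial : ℝ) * Real.Gamma ((k : ℝ) + ν + 1))

/-- Wirtinger derivative `∂_z f = (1/2)(∂_x f − i ∂_y f)`. -/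
noncomputable def wirtDz (f : ℂ → ℂ) (z : ℂ) : ℂ :=
  (1 / 2 : ℂ) * (fderiv ℝ f z 1 - Complex.I * fderiv ℝ f z Complex.I)

/-- Conjugate Wirtinger derivative `∂_z̄ f = (1/2)(∂_x f + i ∂_y f)`. -/
noncomputable def wirtDzbar (f : ℂ → ℂ) (z : ℂ) : ℂ :=
  (1 / 2 : ℂ) * (fderiv ℝ f z 1 + Complex.I * fderiv ℝ f z Complex.I)

/-- First component of `w_l(z) = (e^{i(l−1/2)φ} I_{l−1/2}(mr), e^{i(l+1/2)φ} I_{l+1/2}(mr))`,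
`r = |z|`, `φ = Arg z`. -/
noncomputable def wSol₁ (m l : ℝ) (z : ℂ) : ℂ :=
  Complex.exp (Complex.I * ((l - 1 / 2 : ℝ) : ℂ) * (z.arg : ℂ)) *
    (besselI (l - 1 / 2) (m * ‖z‖) : ℝ)

/-- Second component of `w_l`. -/
noncomputable def wSol₂ (m l : ℝ) (z : ℂ) : ℂ :=
  Complex.exp (Complex.I * ((l + 1 / 2 : ℝ) : ℂ) * (z.arg : ℂ)) *
    (besselI (l + 1 / 2) (m * ‖z‖) : ℝ)

/-- First component of `w*_l(z) = (e^{−i(l+1/2)φ} I_{l+1/2}(mr), e^{−i(l−1/2)φ} I_{l−1/2}(mr))`. -/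
noncomputable def wStar₁ (m l : ℝ) (z : ℂ) : ℂ :=
  Complex.exp (-Complex.I * ((l + 1 / 2 : ℝ) : ℂ) * (z.arg : ℂ)) *
    (besselI (l + 1 / 2) (m * ‖z‖) : ℝ)

/-- Second component of `w*_l`. -/
noncomputable def wStar₂ (m l : ℝ) (z : ℂ) : ℂ :=
  Complex.exp (-Complex.I * ((l - 1 / 2 : ℝ) : ℂ) * (z.arg : ℂ)) *
    (besselI (l - 1 / 2) (m * ‖z‖) : ℝ)

/-!
Both components of `w_l` are of the form `e^{iνφ} I_ν(mr) = z^ν A_ν(z z̄)`, where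
`A_ν(t) = ∑ₖ (m/2)^{2k+ν} tᵏ / (k! Γ(k+ν+1))` is entire, `A_ν' = (m/2) A_{ν+1}` and
`(m/2) A_{ν-1}(t) = ν A_ν(t) + (m/2) t A_{ν+1}(t)`. Since `z^ν` is holomorphic on the slit plane,
`∂_z̄` only sees `A_ν(z z̄)` and gives `(m/2) z^{ν+1} A_{ν+1}`, while
`∂_z = ν z^{ν-1} A_ν + (m/2) z^ν z̄ A_{ν+1} = (m/2) z^{ν-1} A_{ν-1}` by the recurrence.
The components of `w*_l` are complex conjugates of those of `w_l`, and conjugation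
exchanges `∂_z` and `∂_z̄`.
-/

open ComplexConjugate Filter Topology

section Wirtinger

variable {f g : ℂ → ℂ} {z : ℂ}

theorem Filter.EventuallyEq.wirtDz_eq (h : f =ᶠ[𝓝 z] g) : wirtDz f z = wirtDz g z := by
  rw [wirtDz, wirtDz, h.fderiv_eq]

theorem Filter.EventuallyEq.wirtDzbar_eq (h : f =ᶠ[𝓝 z] g) : wirtDzbar f z = wirtDzbar g z := by
  rw [wirtDzbar, wirtDzbar, h.fderiv_eq]

theorem DifferentiableAt.fderiv_real_apply (hf : DifferentiableAt ℂ f z) (v : ℂ) :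
    fderiv ℝ f z v = v * deriv f z := by
  rw [hf.fderiv_restrictScalars ℝ, ContinuousLinearMap.coe_restrictScalars',
    ← fderiv_apply_one_eq_deriv, ← smul_eq_mul, ← map_smul, smul_eq_mul, mul_one]

theorem DifferentiableAt.wirtDz_eq_deriv (hf : DifferentiableAt ℂ f z) :
    wirtDz f z = deriv f z := by
  rw [wirtDz, hf.fderiv_real_apply, hf.fderiv_real_apply]
  linear_combination (-deriv f z / 2) * Complex.I_sq

theorem DifferentiableAt.wirtDzbar_eq_zero (hf : DifferentiableAt ℂ f z) :
    wirtDzbar f z = 0 := by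
  rw [wirtDzbar, hf.fderiv_real_apply, hf.fderiv_real_apply]
  linear_combination (deriv f z / 2) * Complex.I_sq

theorem wirtDz_mul (hf : DifferentiableAt ℝ f z) (hg : DifferentiableAt ℝ g z) :
    wirtDz (fun w => f w * g w) z = wirtDz f z * g z + f z * wirtDz g z := by
  simp only [wirtDz, fderiv_fun_mul hf hg, add_apply, smul_apply, smul_eq_mul]
  ring

theorem wirtDzbar_mul (hf : DifferentiableAt ℝ f z) (hg : DifferentiableAt ℝ g z) :
    wirtDzbar (fun w => f w * g w) z = wirtDzbar f z * g z + f z * wirtDzbar g z := by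
  simp only [wirtDzbar, fderiv_fun_mul hf hg, add_apply, smul_apply, smul_eq_mul]
  ring

theorem wirtDz_comp {A : ℂ → ℂ} (hA : DifferentiableAt ℂ A (g z)) (hg : DifferentiableAt ℝ g z) :
    wirtDz (fun w => A (g w)) z = deriv A (g z) * wirtDz g z := by
  simp only [wirtDz, fderiv_fun_comp z (hA.restrictScalars ℝ) hg, ContinuousLinearMap.comp_apply,
    hA.fderiv_real_apply]
  ring

theorem wirtDzbar_comp {A : ℂ → ℂ} (hA : DifferentiableAt ℂ A (g z))
    (hg : DifferentiableAt ℝ g z) :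
    wirtDzbar (fun w => A (g w)) z = deriv A (g z) * wirtDzbar g z := by
  simp only [wirtDzbar, fderiv_fun_comp z (hA.restrictScalars ℝ) hg, ContinuousLinearMap.comp_apply,
    hA.fderiv_real_apply]
  ring

theorem wirtDz_conj (f : ℂ → ℂ) (z : ℂ) :
    wirtDz (fun w => conj (f w)) z = conj (wirtDzbar f z) := by
  have h : fderiv ℝ (fun w => conj (f w)) z = _ := fderiv_star
  simp [wirtDz, wirtDzbar, h, map_ofNat]
  ring

theorem wirtDzbar_conj (f : ℂ → ℂ) (z : ℂ) :
    wirtDzbar (fun w => conj (f w)) z = conj (wirtDz f z) := by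
  have h : fderiv ℝ (fun w => conj (f w)) z = _ := fderiv_star
  simp [wirtDz, wirtDzbar, h, map_ofNat]

theorem differentiableAt_conj (z : ℂ) : DifferentiableAt ℝ (fun w => conj w) z :=
  differentiableAt_id.star

theorem differentiableAt_mul_conj_self (z : ℂ) : DifferentiableAt ℝ (fun w => w * conj w) z :=
  differentiableAt_fun_id.fun_mul (differentiableAt_conj z)

theorem wirtDz_mul_conj_self (z : ℂ) : wirtDz (fun w => w * conj w) z = conj z := by
  rw [wirtDz_mul differentiableAt_fun_id (differentiableAt_conj z), wirtDz_conj (fun w => w),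
    differentiableAt_fun_id.wirtDz_eq_deriv, differentiableAt_fun_id.wirtDzbar_eq_zero]
  simp

theorem wirtDzbar_mul_conj_self (z : ℂ) : wirtDzbar (fun w => w * conj w) z = z := by
  rw [wirtDzbar_mul differentiableAt_fun_id (differentiableAt_conj z), wirtDzbar_conj (fun w => w),
    differentiableAt_fun_id.wirtDz_eq_deriv, differentiableAt_fun_id.wirtDzbar_eq_zero]
  simp

end Wirtinger

section PowerSeries

variable {c : ℕ → ℂ}

theorem summable_mul_pow_of_summable_norm_mul_pow
    (hc : ∀ R : ℝ, Summable fun k => ‖c k‖ * R ^ k) (t : ℂ) :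
    Summable fun k => c k * t ^ k :=
  .of_norm_bounded (hc ‖t‖) fun k => by rw [norm_mul, norm_pow]

theorem hasDerivAt_tsum_mul_pow (hc : ∀ R : ℝ, Summable fun k => ‖c k‖ * R ^ k) (t : ℂ) :
    HasDerivAt (fun y => ∑' k, c k * y ^ k) (∑' k, c (k + 1) * (k + 1) * t ^ k) t := by
  have hR : 1 ≤ ‖t‖ + 1 := by simp
  have ht : t ∈ Metric.ball 0 (‖t‖ + 1) := by simp
  have hbound (k : ℕ) (y : ℂ) (hy : y ∈ Metric.ball 0 (‖t‖ + 1)) :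
      ‖c k * ((k : ℂ) * y ^ (k - 1))‖ ≤ ‖c k‖ * (2 * (‖t‖ + 1)) ^ k := by
    rw [mem_ball_zero_iff] at hy
    have hpow : ‖y‖ ^ (k - 1) ≤ (‖t‖ + 1) ^ k :=
      (pow_le_pow_left₀ (norm_nonneg y) hy.le _).trans (pow_le_pow_right₀ hR (Nat.sub_le k 1))
    have hk : (k : ℝ) ≤ 2 ^ k := by exact_mod_cast Nat.lt_two_pow_self.le
    rw [norm_mul, norm_mul, norm_pow, Complex.norm_natCast, mul_pow]
    gcongr
  have hderiv := hasDerivAt_tsum_of_isPreconnected (hc (2 * (‖t‖ + 1))) Metric.isOpen_ball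
    (convex_ball (0 : ℂ) _).isPreconnected
    (fun k y _ => (hasDerivAt_pow k y).const_mul (c k)) hbound ht
    (summable_mul_pow_of_summable_norm_mul_pow hc t) ht
  have hsum : Summable fun k => c k * ((k : ℂ) * t ^ (k - 1)) :=
    .of_norm_bounded (hc _) fun k => hbound k t ht
  rw [hsum.tsum_eq_zero_add] at hderiv
  refine hderiv.congr_deriv ?_
  simp [mul_assoc]

end PowerSeries

theorem Real.rpow_two_mul_natCast_add {x : ℝ} (hx : 0 < x) (k : ℕ) (ν : ℝ) :
    x ^ (2 * (k : ℝ) + ν) = (x ^ 2) ^ k * x ^ ν := by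
  rw [Real.rpow_add hx, ← pow_mul, ← Real.rpow_natCast, Nat.cast_mul, Nat.cast_ofNat]

section BesselSeries

noncomputable def besselCoeff (m ν : ℝ) (k : ℕ) : ℝ :=
  (m / 2) ^ (2 * (k : ℝ) + ν) / ((k.factorial : ℝ) * Real.Gamma ((k : ℝ) + ν + 1))

noncomputable def besselSeries (m ν : ℝ) (t : ℂ) : ℂ :=
  ∑' k, (besselCoeff m ν k : ℂ) * t ^ k

variable {m : ℝ}

theorem besselCoeff_succ_mul (hm : 0 < m) (ν : ℝ) (k : ℕ) :
    besselCoeff m ν (k + 1) * (k + 1) = m / 2 * besselCoeff m (ν + 1) k := by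
  have hpow : (m / 2) ^ (2 * ((k + 1 : ℕ) : ℝ) + ν) =
      (m / 2) ^ (2 * (k : ℝ) + (ν + 1)) * (m / 2) := by
    rw [← Real.rpow_add_one (by positivity)]
    push_cast
    ring_nf
  have hΓ : ((k + 1 : ℕ) : ℝ) + ν + 1 = (k : ℝ) + (ν + 1) + 1 := by push_cast; ring
  rw [besselCoeff, besselCoeff, hpow, hΓ, Nat.factorial_succ]
  rcases eq_or_ne (Real.Gamma ((k : ℝ) + (ν + 1) + 1)) 0 with h | h
  · simp [h]
  · push_cast
    field_simp

theorem add_mul_besselCoeff (hm : 0 < m) (ν : ℝ) (k : ℕ) :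
    (k + ν) * besselCoeff m ν k = m / 2 * besselCoeff m (ν - 1) k := by
  have hpow : (m / 2) ^ (2 * (k : ℝ) + ν) = (m / 2) ^ (2 * (k : ℝ) + (ν - 1)) * (m / 2) := by
    rw [← Real.rpow_add_one (by positivity)]
    ring_nf
  rw [besselCoeff, besselCoeff, show (k : ℝ) + (ν - 1) + 1 = k + ν by ring]
  rcases eq_or_ne ((k : ℝ) + ν) 0 with h | h
  · simp [h]
  rw [Real.Gamma_add_one h, hpow]
  rcases eq_or_ne (Real.Gamma ((k : ℝ) + ν)) 0 with h' | h'
  · simp [h']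
  · field_simp

theorem summable_norm_besselCoeff_mul_pow (hm : 0 < m) (ν R : ℝ) :
    Summable fun k => ‖(besselCoeff m ν k : ℂ)‖ * R ^ k := by
  simp only [Complex.norm_real, Real.norm_eq_abs]
  have hm2 : 0 < m / 2 := by positivity
  have hexp : Summable fun k : ℕ => (m / 2) ^ ν * ((m / 2) ^ 2 * |R|) ^ k / k.factorial := by
    simpa [mul_div_assoc] using
      (Real.summable_pow_div_factorial ((m / 2) ^ 2 * |R|)).mul_left ((m / 2) ^ ν)
  refine .of_norm_bounded_eventually_nat hexp ?_
  obtain ⟨N, hN⟩ := exists_nat_ge (1 - ν)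
  filter_upwards [eventually_ge_atTop N] with k hk
  have hΓ : 1 ≤ Real.Gamma ((k : ℝ) + ν + 1) := by
    have h2 : (2 : ℝ) ≤ k + ν + 1 := by
      have : (N : ℝ) ≤ k := by exact_mod_cast hk
      linarith
    simpa [Real.Gamma_two] using Real.Gamma_strictMonoOn_Ici.monotoneOn Set.self_mem_Ici h2 h2
  have hden : (k.factorial : ℝ) ≤ k.factorial * Real.Gamma ((k : ℝ) + ν + 1) :=
    le_mul_of_one_le_right (by positivity) hΓ
  rw [besselCoeff, Real.rpow_two_mul_natCast_add hm2, norm_mul, Real.norm_eq_abs, abs_abs,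
    norm_pow, Real.norm_eq_abs, abs_div, abs_of_pos (by positivity),
    abs_of_pos (by positivity : (0 : ℝ) < k.factorial * Real.Gamma ((k : ℝ) + ν + 1)), mul_pow]
  calc ((m / 2) ^ 2) ^ k * (m / 2) ^ ν / (k.factorial * Real.Gamma ((k : ℝ) + ν + 1)) * |R| ^ k
      ≤ ((m / 2) ^ 2) ^ k * (m / 2) ^ ν / k.factorial * |R| ^ k := by gcongr
    _ = (m / 2) ^ ν * (((m / 2) ^ 2) ^ k * |R| ^ k) / k.factorial := by ring

theorem hasDerivAt_besselSeries (hm : 0 < m) (ν : ℝ) (t : ℂ) :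
    HasDerivAt (besselSeries m ν) (m / 2 * besselSeries m (ν + 1) t) t := by
  refine (hasDerivAt_tsum_mul_pow (summable_norm_besselCoeff_mul_pow hm ν) t).congr_deriv ?_
  rw [besselSeries, ← tsum_mul_left]
  congr 1 with k
  have h : (besselCoeff m ν (k + 1) : ℂ) * (k + 1) = m / 2 * besselCoeff m (ν + 1) k := by
    exact_mod_cast besselCoeff_succ_mul hm ν k
  rw [h, mul_assoc]

theorem besselSeries_sub_one (hm : 0 < m) (ν : ℝ) (t : ℂ) :
    m / 2 * besselSeries m (ν - 1) t =
      ν * besselSeries m ν t + m / 2 * t * besselSeries m (ν + 1) t := by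
  have hterm (k : ℕ) : (m / 2 : ℂ) * ((besselCoeff m (ν - 1) k : ℂ) * t ^ k) =
      ν * ((besselCoeff m ν k : ℂ) * t ^ k) + k * (besselCoeff m ν k : ℂ) * t ^ k := by
    have h : ((k + ν) * besselCoeff m ν k : ℂ) = m / 2 * besselCoeff m (ν - 1) k := by
      exact_mod_cast add_mul_besselCoeff hm ν k
    linear_combination (-t ^ k) * h
  have hA := (summable_mul_pow_of_summable_norm_mul_pow
    (summable_norm_besselCoeff_mul_pow hm ν) t).hasSum
  have hB : HasSum (fun k : ℕ => k * (besselCoeff m ν k : ℂ) * t ^ k)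
      (m / 2 * t * besselSeries m (ν + 1) t) := by
    refine (hasSum_nat_add_iff' 1).mp ?_
    simp only [Finset.range_one, Finset.sum_singleton, Nat.cast_zero, zero_mul, sub_zero]
    have hshift (n : ℕ) : ((n + 1 : ℕ) : ℂ) * besselCoeff m ν (n + 1) * t ^ (n + 1) =
        m / 2 * t * ((besselCoeff m (ν + 1) n : ℂ) * t ^ n) := by
      have h : (besselCoeff m ν (n + 1) : ℂ) * (n + 1) = m / 2 * besselCoeff m (ν + 1) n := by
        exact_mod_cast besselCoeff_succ_mul hm ν n
      push_cast
      linear_combination t ^ (n + 1) * h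
    simp only [hshift]
    exact (summable_mul_pow_of_summable_norm_mul_pow
      (summable_norm_besselCoeff_mul_pow hm (ν + 1)) t).hasSum.mul_left _
  rw [besselSeries, ← tsum_mul_left, tsum_congr hterm]
  exact ((hA.mul_left (ν : ℂ)).add hB).tsum_eq

end BesselSeries

section BesselMode

noncomputable def besselMode (m ν : ℝ) (z : ℂ) : ℂ :=
  Complex.exp (Complex.I * (ν : ℂ) * (z.arg : ℂ)) * (besselI ν (m * ‖z‖) : ℝ)

variable {m : ℝ} {z : ℂ}

theorem cpow_ofReal_eq_exp_mul_norm_rpow (hz : z ≠ 0) (ν : ℝ) :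
    z ^ (ν : ℂ) = Complex.exp (Complex.I * ν * z.arg) * (‖z‖ ^ ν : ℝ) := by
  have hnorm : 0 < ‖z‖ := norm_pos_iff.mpr hz
  rw [Complex.cpow_def_of_ne_zero hz, Complex.log, add_mul, Complex.exp_add,
    Real.rpow_def_of_pos hnorm, Complex.ofReal_exp, Complex.ofReal_mul]
  ring_nf

theorem besselI_mul_norm_eq (hm : 0 < m) (hz : z ≠ 0) (ν : ℝ) :
    besselI ν (m * ‖z‖) = (∑' k, besselCoeff m ν k * (‖z‖ ^ 2) ^ k) * ‖z‖ ^ ν := by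
  have hnorm : 0 < ‖z‖ := norm_pos_iff.mpr hz
  rw [besselI, ← tsum_mul_right]
  congr 1 with k
  rw [mul_div_right_comm, Real.mul_rpow (by positivity) hnorm.le,
    Real.rpow_two_mul_natCast_add hnorm, besselCoeff]
  ring

theorem besselMode_eq_cpow_mul_besselSeries (hm : 0 < m) (hz : z ≠ 0) (ν : ℝ) :
    besselMode m ν z = z ^ (ν : ℂ) * besselSeries m ν (z * conj z) := by
  rw [besselMode, besselI_mul_norm_eq hm hz, cpow_ofReal_eq_exp_mul_norm_rpow hz,
    Complex.mul_conj, Complex.normSq_eq_norm_sq, besselSeries]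
  push_cast [Complex.ofReal_tsum]
  ring

theorem besselMode_eventuallyEq (hm : 0 < m) (hz : z ≠ 0) (ν : ℝ) :
    besselMode m ν =ᶠ[𝓝 z] fun w => w ^ (ν : ℂ) * besselSeries m ν (w * conj w) := by
  filter_upwards [isOpen_ne.mem_nhds hz] with w hw
  exact besselMode_eq_cpow_mul_besselSeries hm hw ν

theorem differentiableAt_besselSeries_mul_conj_self (hm : 0 < m) (ν : ℝ) :
    DifferentiableAt ℝ (fun w => besselSeries m ν (w * conj w)) z :=
  ((hasDerivAt_besselSeries hm ν _).differentiableAt.restrictScalars ℝ).comp z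
    (differentiableAt_mul_conj_self z)

theorem differentiableAt_besselMode (hm : 0 < m) (hz : z ∈ Complex.slitPlane) (ν : ℝ) :
    DifferentiableAt ℝ (besselMode m ν) z := by
  refine .congr_of_eventuallyEq ?_ (besselMode_eventuallyEq hm (Complex.slitPlane_ne_zero hz) ν)
  exact ((Complex.hasStrictDerivAt_cpow_const hz).hasDerivAt.differentiableAt.restrictScalars ℝ).mul
    (differentiableAt_besselSeries_mul_conj_self hm ν)

theorem wirtDz_besselMode (hm : 0 < m) (hz : z ∈ Complex.slitPlane) (ν : ℝ) :
    wirtDz (besselMode m ν) z = m / 2 * besselMode m (ν - 1) z := by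
  have hz0 := Complex.slitPlane_ne_zero hz
  have hcpow := (Complex.hasStrictDerivAt_cpow_const (c := (ν : ℂ)) hz).hasDerivAt.differentiableAt
  rw [(besselMode_eventuallyEq hm hz0 ν).wirtDz_eq,
    wirtDz_mul (hcpow.restrictScalars ℝ) (differentiableAt_besselSeries_mul_conj_self hm ν),
    hcpow.wirtDz_eq_deriv, Complex.deriv_cpow_const hz,
    wirtDz_comp (hasDerivAt_besselSeries hm ν _).differentiableAt
      (differentiableAt_mul_conj_self z),
    (hasDerivAt_besselSeries hm ν _).deriv, wirtDz_mul_conj_self,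
    besselMode_eq_cpow_mul_besselSeries hm hz0, Complex.ofReal_sub, Complex.ofReal_one]
  have hrec := besselSeries_sub_one hm ν (z * conj z)
  have hcpow_sub : z ^ (ν : ℂ) = z ^ ((ν : ℂ) - 1) * z := by
    rw [Complex.cpow_sub _ _ hz0, Complex.cpow_one, div_mul_cancel₀ _ hz0]
  rw [hcpow_sub]
  linear_combination -z ^ ((ν : ℂ) - 1) * hrec

theorem wirtDzbar_besselMode (hm : 0 < m) (hz : z ∈ Complex.slitPlane) (ν : ℝ) :
    wirtDzbar (besselMode m ν) z = m / 2 * besselMode m (ν + 1) z := by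
  have hz0 := Complex.slitPlane_ne_zero hz
  have hcpow := (Complex.hasStrictDerivAt_cpow_const (c := (ν : ℂ)) hz).hasDerivAt.differentiableAt
  rw [(besselMode_eventuallyEq hm hz0 ν).wirtDzbar_eq,
    wirtDzbar_mul (hcpow.restrictScalars ℝ) (differentiableAt_besselSeries_mul_conj_self hm ν),
    hcpow.wirtDzbar_eq_zero,
    wirtDzbar_comp (hasDerivAt_besselSeries hm ν _).differentiableAt
      (differentiableAt_mul_conj_self z),
    (hasDerivAt_besselSeries hm ν _).deriv, wirtDzbar_mul_conj_self,
    besselMode_eq_cpow_mul_besselSeries hm hz0, Complex.ofReal_add, Complex.ofReal_one,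
    Complex.cpow_add _ _ hz0, Complex.cpow_one]
  ring

end BesselMode

theorem wSol₁_eq_besselMode (m l : ℝ) : wSol₁ m l = besselMode m (l - 1 / 2) := rfl

theorem wSol₂_eq_besselMode (m l : ℝ) : wSol₂ m l = besselMode m (l + 1 / 2) := rfl

theorem wStar₁_eq_conj_besselMode (m l : ℝ) :
    wStar₁ m l = fun z => conj (besselMode m (l + 1 / 2) z) := by
  ext z
  simp [wStar₁, besselMode, ← Complex.exp_conj, map_ofNat]

theorem wStar₂_eq_conj_besselMode (m l : ℝ) :
    wStar₂ m l = fun z => conj (besselMode m (l - 1 / 2) z) := by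
  ext z
  simp [wStar₂, besselMode, ← Complex.exp_conj, map_ofNat]

/-- On the slit plane the local solutions `w_l`, `w*_l` are real-differentiable
and satisfy `∂_z w_l = (m/2) w_{l−1}`, `∂_z̄ w_l = (m/2) w_{l+1}`, `∂_z w*_l = (m/2) w*_{l+1}`,
`∂_z̄ w*_l = (m/2) w*_{l−1}` componentwise; in particular each solves the Dirac equation
`∂_z ψ₂ = (m/2)ψ₁`, `∂_z̄ ψ₁ = (m/2)ψ₂`. -/
theorem local_solutions_dirac (m l : ℝ) (hm : 0 < m) :
    ∀ z ∈ Complex.slitPlane,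
      (DifferentiableAt ℝ (wSol₁ m l) z ∧ DifferentiableAt ℝ (wSol₂ m l) z ∧
       DifferentiableAt ℝ (wStar₁ m l) z ∧ DifferentiableAt ℝ (wStar₂ m l) z) ∧
      (wirtDz (wSol₁ m l) z = (m / 2 : ℂ) * wSol₁ m (l - 1) z ∧
       wirtDz (wSol₂ m l) z = (m / 2 : ℂ) * wSol₂ m (l - 1) z) ∧
      (wirtDzbar (wSol₁ m l) z = (m / 2 : ℂ) * wSol₁ m (l + 1) z ∧
       wirtDzbar (wSol₂ m l) z = (m / 2 : ℂ) * wSol₂ m (l + 1) z) ∧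
      (wirtDz (wStar₁ m l) z = (m / 2 : ℂ) * wStar₁ m (l + 1) z ∧
       wirtDz (wStar₂ m l) z = (m / 2 : ℂ) * wStar₂ m (l + 1) z) ∧
      (wirtDzbar (wStar₁ m l) z = (m / 2 : ℂ) * wStar₁ m (l - 1) z ∧
       wirtDzbar (wStar₂ m l) z = (m / 2 : ℂ) * wStar₂ m (l - 1) z) ∧
      (wirtDz (wSol₂ m l) z = (m / 2 : ℂ) * wSol₁ m l z ∧
       wirtDzbar (wSol₁ m l) z = (m / 2 : ℂ) * wSol₂ m l z) ∧
      (wirtDz (wStar₂ m l) z = (m / 2 : ℂ) * wStar₁ m l z ∧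
       wirtDzbar (wStar₁ m l) z = (m / 2 : ℂ) * wStar₂ m l z) := by
  intro z hz
  have hDz (ν μ : ℝ) (h : μ = ν - 1) : wirtDz (besselMode m ν) z = m / 2 * besselMode m μ z :=
    h ▸ wirtDz_besselMode hm hz ν
  have hDzbar (ν μ : ℝ) (h : μ = ν + 1) :
      wirtDzbar (besselMode m ν) z = m / 2 * besselMode m μ z :=
    h ▸ wirtDzbar_besselMode hm hz ν
  have hDzConj (ν μ : ℝ) (h : μ = ν + 1) :
      wirtDz (fun w => conj (besselMode m ν w)) z = m / 2 * conj (besselMode m μ z) := by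
    rw [wirtDz_conj, hDzbar ν μ h, map_mul, map_div₀, Complex.conj_ofReal, map_ofNat]
  have hDzbarConj (ν μ : ℝ) (h : μ = ν - 1) :
      wirtDzbar (fun w => conj (besselMode m ν w)) z = m / 2 * conj (besselMode m μ z) := by
    rw [wirtDzbar_conj, hDz ν μ h, map_mul, map_div₀, Complex.conj_ofReal, map_ofNat]
  have hdiff (ν : ℝ) := differentiableAt_besselMode hm hz ν
  simp only [wSol₁_eq_besselMode, wSol₂_eq_besselMode, wStar₁_eq_conj_besselMode,
    wStar₂_eq_conj_besselMode]
  refine ⟨⟨hdiff _, hdiff _, (hdiff _).star, (hdiff _).star⟩, ⟨hDz _ _ ?_, hDz _ _ ?_⟩,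
    ⟨hDzbar _ _ ?_, hDzbar _ _ ?_⟩, ⟨hDzConj _ _ ?_, hDzConj _ _ ?_⟩,
    ⟨hDzbarConj _ _ ?_, hDzbarConj _ _ ?_⟩, ⟨hDz _ _ ?_, hDzbar _ _ ?_⟩,
    ⟨hDzConj _ _ ?_, hDzbarConj _ _ ?_⟩⟩ <;> ring
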